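/- Urzyczyn's term 𝕌 = (λr. h (r (λf.λs. f s)) (r (λq.λg. g q))) (λo. o o o) is strongly normalizing: every β-reduction sequence starting from 𝕌 is finite. -/

import Mathlib

/-- Untyped lambda terms in de Bruijn representation. -/
inductive Lam : Type
  | var : Nat → Lam
  | app : Lam → Lam → Lam
  | lam : Lam → Lam
deriving DecidableEq

namespace Lam

/-- Lift (shift) free variables at or above `d` by one. -/
def lift (d : Nat) : Lam → Lam
  | var n => if n < d then var n else var (n + 1)
  | app M N => app (lift d M) (lift d N)
  | lam M => lam (lift (d + 1) M)

/-- Capture-avoiding substitution of `s` for the variable with index `k`. -/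
def subst (k : Nat) (s : Lam) : Lam → Lam
  | var n => if n < k then var n else if n = k then s else var (n - 1)
  | app M N => app (subst k s M) (subst k s N)
  | lam M => lam (subst (k + 1) (lift 0 s) M)

/-- One-step β-reduction (compatible closure of the β-rule). -/
inductive Beta : Lam → Lam → Prop
  | beta (M N : Lam) : Beta (app (lam M) N) (subst 0 N M)
  | appL {M M'} (N) : Beta M M' → Beta (app M N) (app M' N)
  | appR (M) {N N'} : Beta N N' → Beta (app M N) (app M N')
  | lamC {M M'} : Beta M M' → Beta (lam M) (lam M')

/-- Multistep β-reduction `↠_β`. -/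
def BetaStar : Lam → Lam → Prop := Relation.ReflTransGen Beta

/-- `M` is a β-normal form. -/
def Normal (M : Lam) : Prop := ∀ N, ¬ Beta M N

/-- `M` is strongly normalizing: no infinite β-reduction sequence starts at `M`. -/
def SN (M : Lam) : Prop := ¬ ∃ f : ℕ → Lam, f 0 = M ∧ ∀ n, Beta (f n) (f (n + 1))

end Lam

namespace Lam

/-- `λf.λs. f s`. -/
def Tpure : Lam := lam (lam (app (var 1) (var 0)))

/-- `λq.λg. g q`. -/
def Jpure : Lam := lam (lam (app (var 0) (var 1)))

/-- Urzyczyn's term `𝕌 = (λr. h (r (λf.λs. f s)) (r (λq.λg. g q))) (λo. o o o)`,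
with `h` a free variable (de Bruijn index 1 under the binder for `r`,
i.e. index 0 of the whole term). -/
def Urz : Lam :=
  app (lam (app (app (var 1) (app (var 0) Tpure)) (app (var 0) Jpure)))
      (lam (app (app (var 0) (var 0)) (var 0)))

end Lam

/-!
Every β-reduction sequence starting from `𝕌` has at most ten steps (the longest has exactly ten).
Since a term has only finitely many one-step reducts, which `Lam.reducts` enumerates, this bound
is a finite computation on the reduction tree of `𝕌`, carried out by `decide` in the kernel.
-/

namespace Lam

theorem sn_iff_acc {M : Lam} : SN M ↔ Acc (flip Beta) M :=
  not_iff_comm.1 not_acc_iff_exists_descending_chain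

def rootReducts : Lam → Lam → List Lam
  | lam M, N => [subst 0 N M]
  | _, _ => []

def reducts : Lam → List Lam
  | var _ => []
  | app M N => rootReducts M N ++ (reducts M).map (app · N) ++ (reducts N).map (app M ·)
  | lam M => (reducts M).map lam

theorem mem_reducts_of_beta {M N : Lam} (h : Beta M N) : N ∈ reducts M := by
  induction h with
  | beta M N => simp [reducts, rootReducts]
  | appL N _ ih => simp [reducts, ih]
  | appR M _ ih => simp [reducts, ih]
  | lamC _ ih => simp [reducts, ih]

def reductionLengthLE : ℕ → Lam → Bool
  | 0, M => (reducts M).isEmpty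
  | n + 1, M => (reducts M).all (reductionLengthLE n)

theorem acc_of_reductionLengthLE {n : ℕ} {M : Lam} (h : reductionLengthLE n M) :
    Acc (flip Beta) M := by
  induction n generalizing M with
  | zero =>
    simp only [reductionLengthLE, List.isEmpty_iff] at h
    exact ⟨M, fun N hN => absurd (mem_reducts_of_beta hN) (by simp [h])⟩
  | succ n ih =>
    simp only [reductionLengthLE, List.all_eq_true] at h
    exact ⟨M, fun N hN => ih (h N (mem_reducts_of_beta hN))⟩

theorem sn_of_reductionLengthLE {n : ℕ} {M : Lam} (h : reductionLengthLE n M) : SN M :=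
  sn_iff_acc.2 (acc_of_reductionLengthLE h)

end Lam

/-- Urzyczyn's term is strongly normalizing. -/
theorem Urz_SN : Lam.SN Lam.Urz :=
  Lam.sn_of_reductionLengthLE (n := 10) (by decide)
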